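/- Let ρ = Σ_{n≥0} γ_n |ψ_n⟩⟨ψ_n| be a density operator with eigenvalues γ_n, fix a cutoff n̄, and set ε = Σ_{n≥n̄} γ_n. Write S_head = −Σ_{n<n̄} γ_n log₂ γ_n. If the mean energy of the discarded tail is ΔE = Σ_{n≥n̄} n γ_n (in an eigenbasis where |ψ_n⟩ has energy n), then the von Neumann entropy satisfies 0 ≤ S(ρ) − (S_head − ε log₂ ε) ≤ ε · g(ΔE/ε), where g(x) = (x+1)log₂(x+1) − x log₂ x. -/

import Mathlib

open scoped BigOperators

/-- The bosonic (thermal) entropy function `g(x) = (x+1)log₂(x+1) − x log₂ x`. -/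
noncomputable def bosonicEntropy (x : ℝ) : ℝ :=
  (x + 1) * Real.logb 2 (x + 1) - x * Real.logb 2 x

/-!
Write `τ` for the tail `γ_n 𝟙[n̄ ≤ n]`, of mass `ε` and first moment `ΔE`. Since `0 log 0 = 0`,
`S = S_head − Σ τ log₂ τ`, so the claim is `0 ≤ ε log₂ ε − Σ τ log₂ τ ≤ ε g(ΔE/ε)`.
The lower bound holds termwise because `τ_n ≤ ε`. For the upper bound, Gibbs' inequality
`Σ τ log₂ τ ≥ Σ τ log₂ q` against the geometric weights `q_n = ε/(μ+1) · (μ/(μ+1))ⁿ`,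
`μ = ΔE/ε`, which have the same mass, gives exactly `ε log₂ ε − ε g(μ)`, because
`log₂ q_n` is affine in `n`. When `ΔE = 0` the tail is concentrated at `n = 0` and both
sides vanish.
-/

open Real

section

variable {ι : Type*} {b : ℝ}

theorem Real.mul_logb_sub_mul_logb_le (hb : 1 < b) {p q : ℝ} (hp : 0 ≤ p) (hq : 0 < q) :
    p * logb b q - p * logb b p ≤ (q - p) / log b := by
  rcases hp.eq_or_lt with rfl | hp
  · simpa using div_nonneg hq.le (log_nonneg hb.le)
  have hlog : p * log (q / p) ≤ q - p := by
    have := mul_le_mul_of_nonneg_left (log_le_sub_one_of_pos (div_pos hq hp)) hp.le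
    rwa [mul_sub_one, mul_div_cancel₀ _ hp.ne'] at this
  calc p * logb b q - p * logb b p = p * log (q / p) / log b := by
        rw [logb, logb, log_div hq.ne' hp.ne']; ring
    _ ≤ (q - p) / log b := div_le_div_of_nonneg_right hlog (log_nonneg hb.le)

theorem tsum_mul_logb_le_tsum_mul_logb (hb : 1 < b) {p q : ι → ℝ} (hp : ∀ i, 0 ≤ p i)
    (hq : ∀ i, 0 < q i) (hps : Summable p) (hqs : Summable q)
    (hpq : Summable fun i => p i * logb b (q i)) (hpp : Summable fun i => p i * logb b (p i))
    (hle : ∑' i, q i ≤ ∑' i, p i) :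
    ∑' i, p i * logb b (q i) ≤ ∑' i, p i * logb b (p i) := by
  have h := (hpq.sub hpp).tsum_le_tsum (fun i => mul_logb_sub_mul_logb_le hb (hp i) (hq i))
    ((hqs.sub hps).div_const _)
  rw [hpq.tsum_sub hpp, tsum_div_const, hqs.tsum_sub hps] at h
  linarith [div_nonpos_of_nonpos_of_nonneg (sub_nonpos.2 hle) (log_nonneg hb.le)]

theorem tsum_mul_logb_le_mul_logb_tsum (hb : 1 < b) {p : ι → ℝ} (hp : ∀ i, 0 ≤ p i)
    (hps : Summable p) (hpp : Summable fun i => p i * logb b (p i)) :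
    ∑' i, p i * logb b (p i) ≤ (∑' i, p i) * logb b (∑' i, p i) := by
  have hterm (i : ι) : p i * logb b (p i) ≤ p i * logb b (∑' i, p i) := by
    rcases (hp i).eq_or_lt with h | h
    · simp [← h]
    · exact mul_le_mul_of_nonneg_left
        (logb_le_logb_of_le hb h (hps.le_tsum i fun j _ => hp j)) h.le
  calc ∑' i, p i * logb b (p i) ≤ ∑' i, p i * logb b (∑' i, p i) :=
        hpp.tsum_le_tsum hterm (hps.mul_right _)
    _ = (∑' i, p i) * logb b (∑' i, p i) := hps.tsum_mul_right _

end

-- The geometric distribution of total mass `ε` and mean `μ`.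
noncomputable def thermalWeight (ε μ : ℝ) (n : ℕ) : ℝ :=
  ε / (μ + 1) * (μ / (μ + 1)) ^ n

section thermalWeight

variable {ε μ : ℝ}

theorem thermalWeight_pos (hε : 0 < ε) (hμ : 0 < μ) (n : ℕ) : 0 < thermalWeight ε μ n := by
  unfold thermalWeight; positivity

theorem hasSum_thermalWeight (hμ : 0 ≤ μ) : HasSum (thermalWeight ε μ) ε := by
  have hμ1 : 0 < μ + 1 := by linarith
  have h := (hasSum_geometric_of_lt_one (by positivity : 0 ≤ μ / (μ + 1))
    ((div_lt_one hμ1).2 (lt_add_one μ))).mul_left (ε / (μ + 1))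
  rwa [one_sub_div hμ1.ne', add_sub_cancel_left, one_div, inv_inv,
    div_mul_cancel₀ _ hμ1.ne'] at h

theorem logb_thermalWeight (b : ℝ) (hε : 0 < ε) (hμ : 0 < μ) (n : ℕ) :
    logb b (thermalWeight ε μ n) =
      logb b ε - logb b (μ + 1) + n * (logb b μ - logb b (μ + 1)) := by
  have hμ1 : 0 < μ + 1 := by linarith
  rw [thermalWeight, logb_mul (by positivity) (by positivity), logb_div hε.ne' hμ1.ne',
    logb_pow, logb_div hμ.ne' hμ1.ne']

end thermalWeight

section MaxEntropy

variable {p : ℕ → ℝ}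

theorem tsum_natCast_mul_eq_zero_of_tsum_eq_zero (hp : ∀ n, 0 ≤ p n) (hps : Summable p)
    (h : ∑' n, p n = 0) : ∑' n : ℕ, n * p n = 0 := by
  have hp0 := (hasSum_zero_iff_of_nonneg hp).1 (h ▸ hps.hasSum)
  simp [hp0]

theorem mul_logb_tsum_sub_tsum_mul_logb_le_of_pos (hp : ∀ n, 0 ≤ p n) (hps : Summable p)
    (hpE : Summable fun n : ℕ => n * p n) (hpp : Summable fun n => p n * logb 2 (p n))
    (hE : 0 < ∑' n : ℕ, n * p n) :
    (∑' n, p n) * logb 2 (∑' n, p n) - ∑' n, p n * logb 2 (p n) ≤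
      (∑' n, p n) * bosonicEntropy ((∑' n : ℕ, n * p n) / ∑' n, p n) := by
  set ε := ∑' n, p n
  set E := ∑' n : ℕ, n * p n
  have hε : 0 < ε := (tsum_nonneg hp).lt_of_ne fun h =>
    hE.ne' (tsum_natCast_mul_eq_zero_of_tsum_eq_zero hp hps h.symm)
  set μ := E / ε
  have hμ : 0 < μ := div_pos hE hε
  have hlogq (n : ℕ) : p n * logb 2 (thermalWeight ε μ n) =
      (logb 2 ε - logb 2 (μ + 1)) * p n + (logb 2 μ - logb 2 (μ + 1)) * (n * p n) := by
    rw [logb_thermalWeight 2 hε hμ]; ring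
  have hpq : Summable fun n => p n * logb 2 (thermalWeight ε μ n) := by
    simpa only [hlogq] using (hps.mul_left _).add (hpE.mul_left _)
  have hgibbs := tsum_mul_logb_le_tsum_mul_logb one_lt_two hp (thermalWeight_pos hε hμ) hps
    (hasSum_thermalWeight hμ.le).summable hpq hpp (hasSum_thermalWeight hμ.le).tsum_eq.le
  have hcross : ∑' n, p n * logb 2 (thermalWeight ε μ n) =
      (logb 2 ε - logb 2 (μ + 1)) * ε + (logb 2 μ - logb 2 (μ + 1)) * (μ * ε) := by
    rw [tsum_congr hlogq, (hps.mul_left _).tsum_add (hpE.mul_left _), tsum_mul_left,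
      tsum_mul_left, div_mul_cancel₀ E hε.ne']
  rw [bosonicEntropy]
  linarith

theorem mul_logb_tsum_sub_tsum_mul_logb_le (hp : ∀ n, 0 ≤ p n) (hps : Summable p)
    (hpE : Summable fun n : ℕ => n * p n) (hpp : Summable fun n => p n * logb 2 (p n)) :
    (∑' n, p n) * logb 2 (∑' n, p n) - ∑' n, p n * logb 2 (p n) ≤
      (∑' n, p n) * bosonicEntropy ((∑' n : ℕ, n * p n) / ∑' n, p n) := by
  rcases (tsum_nonneg fun n => mul_nonneg n.cast_nonneg (hp n)).eq_or_lt with hE | hE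
  · have hp0 (n : ℕ) (hn : n ≠ 0) : p n = 0 := by
      have := congrFun ((hasSum_zero_iff_of_nonneg fun n => mul_nonneg n.cast_nonneg (hp n)).1
        (hE ▸ hpE.hasSum)) n
      exact (mul_eq_zero.1 this).resolve_left (Nat.cast_ne_zero.2 hn)
    rw [← hE, tsum_eq_single 0 hp0, tsum_eq_single 0 fun n hn => by simp [hp0 n hn]]
    simp [bosonicEntropy]
  · exact mul_logb_tsum_sub_tsum_mul_logb_le_of_pos hp hps hpE hpp hE

end MaxEntropy

theorem Summable.ite_le {α : Type*} [AddCommGroup α] [UniformSpace α] [IsUniformAddGroup α]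
    [CompleteSpace α] {f : ℕ → α} (hf : Summable f) (k : ℕ) :
    Summable fun n => if k ≤ n then f n else 0 :=
  (hf.indicator {n | k ≤ n}).congr fun n => by simp [Set.indicator_apply]

theorem Summable.sum_range_add_tsum_ite_le {α : Type*} [AddCommGroup α] [TopologicalSpace α]
    [IsTopologicalAddGroup α] [T2Space α] {f : ℕ → α} (hf : Summable f) (k : ℕ) :
    ∑ n ∈ Finset.range k, f n + ∑' n, (if k ≤ n then f n else 0) = ∑' n, f n := by
  rw [← hf.sum_add_tsum_compl (s := Finset.range k), tsum_subtype]
  congr 2 with n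
  simp [Set.indicator_apply]

/-- Truncation error bound for the von Neumann entropy: discarding a tail of total weight
`ε` and mean energy `ΔE` changes the entropy by at most `ε·g(ΔE/ε)` beyond `−ε log₂ ε`. -/
theorem truncation_error_bound (γ : ℕ → ℝ) (hnn : ∀ n, 0 ≤ γ n)
    (hsum : ∑' n : ℕ, γ n = 1)
    (hE : Summable fun n : ℕ => (n : ℝ) * γ n)
    (hent : Summable fun n => γ n * Real.logb 2 (γ n))
    (nbar : ℕ) :
    let ε : ℝ := ∑' n : ℕ, if nbar ≤ n then γ n else 0
    let Shead : ℝ := -∑ n ∈ Finset.range nbar, γ n * Real.logb 2 (γ n)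
    let ΔE : ℝ := ∑' n : ℕ, if nbar ≤ n then (n : ℝ) * γ n else 0
    let S : ℝ := -∑' n : ℕ, γ n * Real.logb 2 (γ n)
    0 ≤ S - (Shead - ε * Real.logb 2 ε) ∧
    S - (Shead - ε * Real.logb 2 ε) ≤ ε * bosonicEntropy (ΔE / ε) := by
  intro ε Shead ΔE S
  have hγ : Summable γ := by
    by_contra h
    simp [tsum_eq_zero_of_not_summable h] at hsum
  set τ : ℕ → ℝ := fun n => if nbar ≤ n then γ n else 0
  have hτ (n : ℕ) : 0 ≤ τ n := ite_nonneg (hnn n) le_rfl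
  have hτE : Summable fun n : ℕ => n * τ n := by
    simpa only [τ, mul_ite, mul_zero] using hE.ite_le nbar
  have hτlog (n : ℕ) : τ n * logb 2 (τ n) = if nbar ≤ n then γ n * logb 2 (γ n) else 0 := by
    simp only [τ]; split_ifs <;> simp
  have hτp : Summable fun n => τ n * logb 2 (τ n) := by
    simpa only [hτlog] using hent.ite_le nbar
  have hΔE : ΔE = ∑' n : ℕ, n * τ n := by simp only [ΔE, τ, mul_ite, mul_zero]
  have hS : S - (Shead - ε * logb 2 ε) = ε * logb 2 ε - ∑' n, τ n * logb 2 (τ n) := by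
    simp only [S, Shead]
    rw [tsum_congr hτlog, ← hent.sum_range_add_tsum_ite_le nbar]
    ring
  rw [hS, hΔE]
  exact ⟨sub_nonneg.2 (tsum_mul_logb_le_mul_logb_tsum one_lt_two hτ (hγ.ite_le nbar) hτp),
    mul_logb_tsum_sub_tsum_mul_logb_le hτ (hγ.ite_le nbar) hτE hτp⟩
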